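/- arXiv:0902.1260 — 4 statements merged into one kernel-verified Lean document; each statement's English description precedes it below -/
import Mathlib

section
/- Let f : ℝ → ℝ be continuous and strictly increasing on [0, ∞) with f(0) = 0, and let finv : ℝ → ℝ be continuous on [0, ∞) with finv(0) = 0 and satisfy finv(f(x)) = x and f(finv(y)) = y for all x, y ≥ 0. Then for all reals g, h ≥ 0, ∫₀^g f(x) dx + ∫₀^h finv(x) dx ≥ g·h. -/
open MeasureTheory intervalIntegral Set Finset

/-- Young's inequality in integral form. -/
theorem stmt_1 (f finv : ℝ → ℝ)
    (hfc : ContinuousOn f (Set.Ici 0))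
    (hfm : StrictMonoOn f (Set.Ici 0))
    (hf0 : f 0 = 0)
    (hic : ContinuousOn finv (Set.Ici 0))
    (hi0 : finv 0 = 0)
    (hinv1 : ∀ x ≥ (0:ℝ), finv (f x) = x)
    (hinv2 : ∀ y ≥ (0:ℝ), f (finv y) = y)
    (g h : ℝ) (hg : 0 ≤ g) (hh : 0 ≤ h) :
    (∫ x in (0:ℝ)..g, f x) + (∫ x in (0:ℝ)..h, finv x) ≥ g * h := by
  -- f is monotone (non-strict) on Ici 0
  have hfmono : ∀ ⦃u v : ℝ⦄, 0 ≤ u → u ≤ v → f u ≤ f v := by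
    intro u v hu huv
    exact hfm.monotoneOn hu (hu.trans huv) huv
  have hfnn : ∀ x : ℝ, 0 ≤ x → 0 ≤ f x := fun x hx => hf0 ▸ hfmono le_rfl hx
  -- finv is injective on Ici 0
  have hfinj : Set.InjOn finv (Set.Ici 0) := by
    intro y1 h1 y2 h2 e
    rw [← hinv2 y1 h1, ← hinv2 y2 h2, e]
  -- finv is monotone on Ici 0
  have hmono : ∀ ⦃y1 y2 : ℝ⦄, 0 ≤ y1 → y1 ≤ y2 → finv y1 ≤ finv y2 := by
    intro y1 y2 h1 h12
    rcases eq_or_lt_of_le (h1.trans h12) with h2 | h2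
    · have : y1 = 0 := le_antisymm (h12.trans h2.symm.le) h1
      rw [this, ← h2]
    · have hsub : Icc (0:ℝ) y2 ⊆ Ici 0 := fun x hx => hx.1
      rcases ContinuousOn.strictMonoOn_of_injOn_Icc' h2.le (hic.mono hsub)
          (hfinj.mono hsub) with hm | ha
      · exact hm.monotoneOn ⟨h1, h12⟩ ⟨h1.trans h12, le_rfl⟩ h12
      · exfalso
        have hev : ∀ᶠ x in nhdsWithin (0:ℝ) (Set.Ioi 0), f x < y2 := by
          have hc : ContinuousWithinAt f (Set.Ici 0) 0 := hfc 0 (Set.mem_Ici.mpr le_rfl)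
          have h' : ∀ᶠ x in nhdsWithin (0:ℝ) (Set.Ici 0), f x < y2 :=
            hc.eventually (isOpen_Iio.eventually_mem (by simpa [hf0] using h2))
          exact h'.filter_mono (nhdsWithin_mono _ Set.Ioi_subset_Ici_self)
        obtain ⟨x, hxlt, hx0⟩ := (hev.and (eventually_mem_nhdsWithin)).exists
        have hx0' : (0:ℝ) < x := hx0
        have hfx0 : 0 < f x := by
          have := hfm (Set.mem_Ici.mpr le_rfl) (Set.mem_Ici.mpr hx0'.le) hx0'
          simpa [hf0] using this
        have := ha ⟨le_rfl, h2.le⟩ ⟨hfx0.le, hxlt.le⟩ hfx0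
        rw [hi0, hinv1 x hx0'.le] at this
        linarith
  have hinvnn : ∀ y : ℝ, 0 ≤ y → 0 ≤ finv y := fun y hy => hi0 ▸ hmono le_rfl hy
  -- integrability
  have hfint : ∀ {u v : ℝ}, 0 ≤ u → u ≤ v → IntervalIntegrable f volume u v := by
    intro u v hu huv
    apply ContinuousOn.intervalIntegrable
    apply hfc.mono
    rw [Set.uIcc_of_le huv]
    exact fun x hx => hu.trans hx.1
  have hiint : ∀ {u v : ℝ}, 0 ≤ u → u ≤ v → IntervalIntegrable finv volume u v := by
    intro u v hu huv
    apply ContinuousOn.intervalIntegrable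
    apply hic.mono
    rw [Set.uIcc_of_le huv]
    exact fun x hx => hu.trans hx.1
  -- the function F
  set F : ℝ → ℝ := fun x => (∫ t in (0:ℝ)..x, f t) + (∫ t in (0:ℝ)..(f x), finv t) - x * f x with hF
  have hF0 : F 0 = 0 := by simp [hF, hf0]
  -- step bound
  have hstep : ∀ u v : ℝ, 0 ≤ u → u ≤ v → |F v - F u| ≤ (v - u) * (f v - f u) := by
    intro u v hu huv
    have hfu : 0 ≤ f u := hfnn u hu
    have hfuv : f u ≤ f v := hfmono hu huv
    have hsplit1 : (∫ t in (0:ℝ)..v, f t) = (∫ t in (0:ℝ)..u, f t) + ∫ t in u..v, f t :=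
      (integral_add_adjacent_intervals (hfint le_rfl hu) (hfint hu huv)).symm
    have hsplit2 : (∫ t in (0:ℝ)..(f v), finv t)
        = (∫ t in (0:ℝ)..(f u), finv t) + ∫ t in (f u)..(f v), finv t :=
      (integral_add_adjacent_intervals (hiint le_rfl hfu) (hiint hfu hfuv)).symm
    have hI1lo : (v - u) * f u ≤ ∫ t in u..v, f t := by
      have := intervalIntegral.integral_mono_on huv (_root_.intervalIntegrable_const (c := f u))
        (hfint hu huv) (fun x hx => hfmono hu hx.1)
      simpa using this
    have hI1hi : (∫ t in u..v, f t) ≤ (v - u) * f v := by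
      have := intervalIntegral.integral_mono_on huv (hfint hu huv)
        (_root_.intervalIntegrable_const (c := f v)) (fun x hx => hfmono (hu.trans hx.1) hx.2)
      simpa using this
    have hI2lo : (f v - f u) * u ≤ ∫ t in (f u)..(f v), finv t := by
      have := intervalIntegral.integral_mono_on hfuv (_root_.intervalIntegrable_const (c := u))
        (hiint hfu hfuv) (fun y hy => by
          have h1 := hmono hfu hy.1
          rwa [hinv1 u hu] at h1)
      simpa using this
    have hI2hi : (∫ t in (f u)..(f v), finv t) ≤ (f v - f u) * v := by
      have := intervalIntegral.integral_mono_on hfuv (hiint hfu hfuv)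
        (_root_.intervalIntegrable_const (c := v)) (fun y hy => by
          have h1 := hmono (hfu.trans hy.1) hy.2
          rwa [hinv1 v (hu.trans huv)] at h1)
      simpa using this
    have hdiff : F v - F u = (∫ t in u..v, f t) + (∫ t in (f u)..(f v), finv t)
        - (v * f v - u * f u) := by
      simp only [hF]
      rw [hsplit1, hsplit2]; ring
    rw [hdiff, abs_le]
    constructor <;> nlinarith
  -- key equality
  have key : ∀ a : ℝ, 0 ≤ a → (∫ t in (0:ℝ)..a, f t) + (∫ t in (0:ℝ)..(f a), finv t) = a * f a := by
    intro a ha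
    have hbound : ∀ n : ℕ, 0 < n → |F a| ≤ a * f a / n := by
      intro n hn
      set x : ℕ → ℝ := fun i => a * i / n with hx
      have hn' : (0:ℝ) < n := Nat.cast_pos.mpr hn
      have hx0 : x 0 = 0 := by simp [hx]
      have hxn : x n = a := by simp only [hx]; exact mul_div_cancel_right₀ a hn'.ne'
      have hxi : ∀ i : ℕ, 0 ≤ x i := fun i => by
        apply div_nonneg (mul_nonneg ha (Nat.cast_nonneg i)) hn'.le
      have hxs : ∀ i : ℕ, x i ≤ x (i + 1) := fun i => by
        simp only [hx]
        gcongr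
        exact Nat.le_succ i
      have hxd : ∀ i : ℕ, x (i + 1) - x i = a / n := fun i => by
        simp only [hx]; push_cast; ring
      have htele : F a = ∑ i ∈ Finset.range n, (F (x (i+1)) - F (x i)) := by
        rw [Finset.sum_range_sub (fun i => F (x i)), hx0, hxn, hF0, sub_zero]
      have htelef : ∑ i ∈ Finset.range n, (f (x (i+1)) - f (x i)) = f a := by
        rw [Finset.sum_range_sub (fun i => f (x i)), hx0, hxn, hf0, sub_zero]
      calc |F a| = |∑ i ∈ Finset.range n, (F (x (i+1)) - F (x i))| := by rw [← htele]
        _ ≤ ∑ i ∈ Finset.range n, |F (x (i+1)) - F (x i)| := Finset.abs_sum_le_sum_abs _ _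
        _ ≤ ∑ i ∈ Finset.range n, (a / n) * (f (x (i+1)) - f (x i)) := by
            apply Finset.sum_le_sum
            intro i _
            have := hstep (x i) (x (i+1)) (hxi i) (hxs i)
            rwa [hxd i] at this
        _ = a * f a / n := by
            rw [← Finset.mul_sum, htelef]; ring
    have hlim : Filter.Tendsto (fun n : ℕ => a * f a / n) Filter.atTop (nhds 0) :=
      tendsto_const_div_atTop_nhds_zero_nat _
    have habs : |F a| ≤ 0 := by
      refine ge_of_tendsto hlim ?_
      filter_upwards [Filter.eventually_gt_atTop 0] with n hn
      exact hbound n hn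
    have : F a = 0 := abs_eq_zero.mp (le_antisymm habs (abs_nonneg _))
    have hFa : (∫ t in (0:ℝ)..a, f t) + (∫ t in (0:ℝ)..(f a), finv t) - a * f a = 0 := this
    linarith
  -- main argument
  rcases le_total h (f g) with hc | hc
  · set a := finv h with hadef
    have ha0 : 0 ≤ a := hinvnn h hh
    have hfa : f a = h := hinv2 h hh
    have hag : a ≤ g := by
      by_contra hcon
      push_neg at hcon
      have := hfm (Set.mem_Ici.mpr hg) (Set.mem_Ici.mpr ha0) hcon
      rw [hfa] at this; linarith
    have hkey := key a ha0
    rw [hfa] at hkey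
    have hsplit : (∫ t in (0:ℝ)..g, f t) = (∫ t in (0:ℝ)..a, f t) + ∫ t in a..g, f t :=
      (integral_add_adjacent_intervals (hfint le_rfl ha0) (hfint ha0 hag)).symm
    have hlo : (g - a) * h ≤ ∫ t in a..g, f t := by
      have := intervalIntegral.integral_mono_on hag (_root_.intervalIntegrable_const (c := h))
        (hfint ha0 hag) (fun t ht => by
          have := hfmono ha0 ht.1
          rwa [hfa] at this)
      simpa using this
    rw [ge_iff_le, hsplit]
    nlinarith
  · have hkey := key g hg
    have hfg : 0 ≤ f g := hfnn g hg
    have hsplit : (∫ t in (0:ℝ)..h, finv t)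
        = (∫ t in (0:ℝ)..(f g), finv t) + ∫ t in (f g)..h, finv t :=
      (integral_add_adjacent_intervals (hiint le_rfl hfg) (hiint hfg hc)).symm
    have hlo : (h - f g) * g ≤ ∫ t in (f g)..h, finv t := by
      have := intervalIntegral.integral_mono_on hc (_root_.intervalIntegrable_const (c := g))
        (hiint hfg hc) (fun y hy => by
          have := hmono hfg hy.1
          rwa [hinv1 g hg] at this)
      simpa using this
    rw [ge_iff_le, hsplit]
    nlinarith
end

section
/- Let α > 1 be real and set γ = α·(1 + (1 + 3/α)^α). Then for all reals n ≥ 0 and s ≥ 0: γ · s · n^{1-1/α} − γ · (1 − 1/(2α)) · ((1 − 1/(2α)) · n)^{1−1/α} · (1 + 3/α) · n^{1/α} ≤ (γ/α) · s^α − (γ/α) · n. -/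
/-- The analytic core of the potential-drift bound in the many-lagging-jobs case. -/
theorem stmt_3 (α : ℝ) (hα : 1 < α) (γ : ℝ) (hγ : γ = α * (1 + (1 + 3/α) ^ α))
    (n s : ℝ) (hn : 0 ≤ n) (hs : 0 ≤ s) :
    γ * s * n ^ (1 - 1/α)
      - γ * (1 - 1/(2*α)) * ((1 - 1/(2*α)) * n) ^ (1 - 1/α) * (1 + 3/α) * n ^ (1/α)
    ≤ (γ/α) * s ^ α - (γ/α) * n := by
  have hα0 : (0:ℝ) < α := lt_trans one_pos hα
  have hx0 : 0 < 1/α := by positivity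
  have hx1 : 1/α < 1 := by rw [div_lt_one hα0]; exact hα
  set x : ℝ := 1/α with hxdef
  -- t := 1 - 1/(2α)
  have ht0 : 0 < 1 - 1/(2*α) := by
    have : 1/(2*α) < 1 := by rw [div_lt_one (by positivity)]; linarith
    linarith
  set t : ℝ := 1 - 1/(2*α) with htdef
  have htx : t = 1 - x/2 := by rw [htdef, hxdef]; ring
  have ht1 : t ≤ 1 := by rw [htx]; linarith
  -- γ > 0
  have hγ0 : 0 < γ := by
    rw [hγ]
    have : (0:ℝ) ≤ (1 + 3/α) ^ α := Real.rpow_nonneg (by positivity) _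
    nlinarith
  -- Young's inequality with exponents α, α/(α-1)
  have hconj : α.HolderConjugate (α/(α-1)) := (Real.holderConjugate_iff_eq_conjExponent hα).mpr rfl
  have hA : 0 ≤ n ^ (1 - x) := Real.rpow_nonneg hn _
  have hyoung : s * n ^ (1 - x) ≤ s ^ α / α + (1 - x) * n := by
    have h := Real.young_inequality_of_nonneg hs hA hconj
    have hpow : (n ^ (1 - x)) ^ (α/(α-1)) = n := by
      have hne : α - 1 ≠ 0 := sub_ne_zero.mpr hα.ne'
      rw [← Real.rpow_mul hn, show (1 - x) * (α/(α-1)) = 1 by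
        rw [hxdef]; field_simp, Real.rpow_one]
    rw [hpow] at h
    calc s * n ^ (1 - x) ≤ s ^ α / α + n / (α/(α-1)) := h
      _ = s ^ α / α + (1 - x) * n := by
          rw [hxdef]; field_simp
  have hyoung' : s * n ^ (1 - x) ≤ x * s ^ α + (1 - x) * n := by
    have : s ^ α / α = x * s ^ α := by rw [hxdef]; ring
    linarith [hyoung, this.le, this.ge]
  -- split ((1-1/(2α))*n)^(1-x)
  have hsplit : (t * n) ^ (1 - x) = t ^ (1 - x) * n ^ (1 - x) :=
    Real.mul_rpow ht0.le hn
  -- n^(1-x) * n^x = n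
  have hAB : n ^ (1 - x) * n ^ x = n := by
    rw [← Real.rpow_add' hn (by norm_num)]
    norm_num
  -- key coefficient bound
  have htpow : t ≤ t ^ (1 - x) := by
    have := Real.rpow_le_rpow_of_exponent_ge ht0 ht1 (show 1 - x ≤ 1 by linarith)
    simpa using this
  have hkey : 1 ≤ t * t ^ (1 - x) * (1 + 3/α) := by
    have h3 : (3:ℝ)/α = 3 * x := by rw [hxdef]; ring
    have h1 : t * t ≤ t * t ^ (1 - x) := mul_le_mul_of_nonneg_left htpow ht0.le
    have h2 : 1 ≤ t * t * (1 + 3 * x) := by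
      rw [htx]
      nlinarith [mul_pos (mul_pos hx0 (show (0:ℝ) < 8 - 3*x by linarith)) (show (0:ℝ) < 1 - x by linarith)]
    calc (1:ℝ) ≤ t * t * (1 + 3 * x) := h2
      _ ≤ t * t ^ (1 - x) * (1 + 3 * x) := by nlinarith [hx0]
      _ = t * t ^ (1 - x) * (1 + 3/α) := by rw [h3]
  -- assemble
  have hB : 0 ≤ n ^ x := Real.rpow_nonneg hn _
  have h1 : γ * (s * n ^ (1 - x)) ≤ γ * (x * s ^ α + (1 - x) * n) :=
    mul_le_mul_of_nonneg_left hyoung' hγ0.le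
  have h2 : γ * n ≤ γ * (t * t ^ (1 - x) * (1 + 3/α) * n) := by
    have : n ≤ t * t ^ (1 - x) * (1 + 3/α) * n := by
      nlinarith [hkey, hn]
    exact mul_le_mul_of_nonneg_left this hγ0.le
  have h2' : γ * n ≤ γ * (t * t ^ (1 - x) * (1 + 3/α) * (n ^ (1 - x) * n ^ x)) := by
    rw [hAB]; exact h2
  rw [hsplit, show γ / α = γ * x by rw [hxdef]; ring]
  nlinarith [h1, h2']
end

section
/- Let α > 1 be real, γ = α·(1 + (1 + 3/α)^α), and c = 4α³·(1 + (1 + 3/α)^α). Then for all reals n_a ≥ 0, n_o ≥ 0, s_o ≥ 0: n_a + ((1 + 3/α) · n_a^{1/α})^α + (γ/α)·s_o^α − (γ/α)·n_a ≤ c · (n_o + s_o^α). -/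
/-- Running condition in the case of at least (1 - 1/(2α))⌈n_a/(2α)⌉ lagging jobs. -/
theorem stmt_4 (α : ℝ) (hα : 1 < α) (γ c : ℝ)
    (hγ : γ = α * (1 + (1 + 3/α) ^ α))
    (hc : c = 4 * α^3 * (1 + (1 + 3/α) ^ α))
    (na no so : ℝ) (hna : 0 ≤ na) (hno : 0 ≤ no) (hso : 0 ≤ so) :
    na + ((1 + 3/α) * na ^ (1/α)) ^ α + (γ/α) * so ^ α - (γ/α) * na
      ≤ c * (no + so ^ α) := by
  have hα0 : (0:ℝ) < α := by linarith
  have hb : (0:ℝ) ≤ 1 + 3/α := by positivity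
  have hK : (0:ℝ) < (1 + 3/α) ^ α := Real.rpow_pos_of_pos (by positivity) α
  have hmul : ((1 + 3/α) * na ^ (1/α)) ^ α = (1 + 3/α) ^ α * na := by
    rw [Real.mul_rpow hb (Real.rpow_nonneg hna _), one_div,
      Real.rpow_inv_rpow hna (ne_of_gt hα0)]
  have hγα : γ / α = 1 + (1 + 3/α) ^ α := by
    rw [hγ]; field_simp
  set K := (1 + 3/α) ^ α with hKdef
  have hso' : (0:ℝ) ≤ so ^ α := Real.rpow_nonneg hso _
  have h1 : (1:ℝ) ≤ 4 * α ^ 3 := by nlinarith [one_lt_pow₀ hα (three_ne_zero)]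
  have hLHS : na + ((1 + 3/α) * na ^ (1/α)) ^ α + (γ/α) * so ^ α - (γ/α) * na
      = (1 + K) * so ^ α := by
    rw [hmul, hγα]; ring
  rw [hLHS, hc]
  have : (1 + K) * so ^ α ≤ (4 * α ^ 3 * (1 + K)) * so ^ α := by
    apply mul_le_mul_of_nonneg_right _ hso'
    nlinarith
  calc (1 + K) * so ^ α ≤ (4 * α ^ 3 * (1 + K)) * so ^ α := this
    _ ≤ 4 * α ^ 3 * (1 + K) * (no + so ^ α) := by
        have hP : (0:ℝ) ≤ 4 * α ^ 3 * (1 + K) := by nlinarith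
        nlinarith [mul_nonneg hP hno]
end

section
/- Let α > 1 be real, γ = α·(1 + (1 + 3/α)^α), and c = 4α³·(1 + (1 + 3/α)^α). Then for all reals n_a ≥ 0, s_o ≥ 0 and n_o ≥ n_a/(4α²): n_a + (1 + 3/α)^α · n_a + (γ/α)·s_o^α + γ·(1 − 1/α)·n_a ≤ c · (n_o + s_o^α). -/
/-- Running condition in the case of few lagging jobs, where n_o ≥ n_a/(4α²). -/
theorem stmt_5 (α : ℝ) (hα : 1 < α) (γ c : ℝ)
    (hγ : γ = α * (1 + (1 + 3/α) ^ α))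
    (hc : c = 4 * α^3 * (1 + (1 + 3/α) ^ α))
    (na no so : ℝ) (hna : 0 ≤ na) (hso : 0 ≤ so) (hno : no ≥ na / (4*α^2)) :
    na + (1 + 3/α) ^ α * na + (γ/α) * so ^ α + γ * (1 - 1/α) * na
      ≤ c * (no + so ^ α) := by
  have hα0 : (0:ℝ) < α := by linarith
  have hB : (0:ℝ) < (1 + 3/α) ^ α := by
    apply Real.rpow_pos_of_pos; positivity
  have hsoa : (0:ℝ) ≤ so ^ α := Real.rpow_nonneg hso α
  have hγα : γ / α = 1 + (1 + 3/α) ^ α := by rw [hγ]; field_simp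
  have hno' : α * na ≤ 4 * α^3 * no := by
    have := (div_le_iff₀ (by positivity : (0:ℝ) < 4*α^2)).mp hno
    nlinarith
  rw [hc, hγ]
  have key : α * (1 + (1 + 3/α) ^ α) / α = 1 + (1 + 3/α) ^ α := by field_simp
  have key2 : α * (1 + (1 + 3/α) ^ α) * (1 - 1/α) = (α - 1) * (1 + (1 + 3/α) ^ α) := by
    field_simp
  rw [key, key2]
  have hpos : (0:ℝ) ≤ 1 + (1 + 3/α) ^ α := by positivity
  have h1 : 0 ≤ (1 + (1 + 3/α) ^ α) * (4*α^3*no - α*na) := mul_nonneg hpos (by linarith)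
  have h2 : 0 ≤ (1 + (1 + 3/α) ^ α) * ((4*α^3 - 1) * so ^ α) :=
    mul_nonneg hpos (mul_nonneg (by nlinarith) hsoa)
  nlinarith [h1, h2]
end
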